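/- arXiv:1604.02548 — 6 statements merged into one kernel-verified Lean document; each statement's English description precedes it below -/
import Mathlib

section
/- Let ℓ ≥ 1 be an integer and let k, k' ∈ {π m/(ℓ+1) : m ∈ {1, …, ℓ}}. Then ∑_{x=1}^{ℓ} sin(x k)² · sin(x k') · cos(x k') = 0. -/
open Real

/-- For momenta `k, k'` in the one-dimensional Dirichlet lattice
`{π m/(ℓ+1) : m ∈ {1,…,ℓ}}`, the sum `∑_{x=1}^ℓ sin(xk)² sin(xk') cos(xk')` vanishes. -/
theorem trig_sum_vanishing (ℓ : ℕ) (hℓ : 1 ≤ ℓ) (k k' : ℝ)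
    (hk : ∃ m ∈ Finset.Icc 1 ℓ, k = π * (m : ℝ) / (ℓ + 1))
    (hk' : ∃ m ∈ Finset.Icc 1 ℓ, k' = π * (m : ℝ) / (ℓ + 1)) :
    ∑ x ∈ Finset.Icc 1 ℓ,
      Real.sin ((x : ℝ) * k) ^ 2 * Real.sin ((x : ℝ) * k') * Real.cos ((x : ℝ) * k') = 0 := by
  obtain ⟨m, hm, rfl⟩ := hk
  obtain ⟨m', hm', rfl⟩ := hk'
  have hne : (ℓ : ℝ) + 1 ≠ 0 := by positivity
  have harg : ∀ (n : ℕ) (x : ℕ), x ∈ Finset.Icc 1 ℓ →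
      ((ℓ + 1 - x : ℕ) : ℝ) * (π * n / (ℓ + 1)) = (n : ℝ) * π - (x : ℝ) * (π * n / (ℓ + 1)) := by
    intro n x hx
    simp only [Finset.mem_Icc] at hx
    have hxle : x ≤ ℓ + 1 := hx.2.trans (Nat.le_succ ℓ)
    push_cast [Nat.cast_sub hxle]
    field_simp
  have key : ∀ x ∈ Finset.Icc 1 ℓ,
      (Real.sin ((x : ℝ) * (π * m / (ℓ + 1))) ^ 2 * Real.sin ((x : ℝ) * (π * m' / (ℓ + 1))) *
        Real.cos ((x : ℝ) * (π * m' / (ℓ + 1)))) +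
      (Real.sin (((ℓ + 1 - x : ℕ) : ℝ) * (π * m / (ℓ + 1))) ^ 2 *
        Real.sin (((ℓ + 1 - x : ℕ) : ℝ) * (π * m' / (ℓ + 1))) *
        Real.cos (((ℓ + 1 - x : ℕ) : ℝ) * (π * m' / (ℓ + 1)))) = 0 := by
    intro x hx
    rw [harg m x hx, harg m' x hx, Real.sin_nat_mul_pi_sub, Real.sin_nat_mul_pi_sub,
      Real.cos_nat_mul_pi_sub]
    have h1 : (-1 : ℝ) ^ (m * 2) = 1 := by rw [mul_comm, pow_mul]; norm_num
    have h2 : (-1 : ℝ) ^ (m' * 2) = 1 := by rw [mul_comm, pow_mul]; norm_num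
    ring_nf
    rw [h1, h2]
    ring
  refine Finset.sum_involution (fun x _ => ℓ + 1 - x) (fun x hx => key x hx) ?_ ?_ ?_
  · intro x hx hne0
    intro h
    apply hne0
    have := key x hx
    rw [h] at this
    linarith
  · intro x hx
    simp only [Finset.mem_Icc] at hx ⊢
    omega
  · intro x hx
    simp only [Finset.mem_Icc] at hx
    show ℓ + 1 - (ℓ + 1 - x) = x
    omega
end

section
/- Let ℓ ≥ 1 be an integer and let k, k' ∈ {π m/(ℓ+1) : m ∈ {1, …, ℓ}}. Then (2/(ℓ+1)) ∑_{x=1}^{ℓ} sin(x k)² sin(x k')² = 1/2 + (1/4)(δ_{k,k'} + δ_{k+k',π}), where δ denotes the Kronecker delta (δ_{a,b} = 1 if a = b and 0 otherwise). -/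
/-!
Since `sin 0 = 0`, the sum may run over a full period `x ∈ {0, …, ℓ}` of the lattice
`N = ℓ + 1`. Linearising, `sin² a sin² b` is a combination of `1`, `cos 2a`, `cos 2b`,
`cos (2a + 2b)` and `cos (2a - 2b)`, and each cosine sums over a period to `N` or `0` according
as `N` divides its frequency (orthogonality of the `N`-th roots of unity). For `k = πm/N`,
`k' = πm'/N` with `1 ≤ m, m' ≤ ℓ`, only `m - m' = 0` (i.e. `k = k'`) and `m + m' = N`
(i.e. `k + k' = π`) can be divisible by `N`.
-/
open Real Finset

theorem geom_sum_eq_ite_of_pow_eq_one {K : Type*} [Field K] [DecidableEq K] {ζ : K} {N : ℕ}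
    (h : ζ ^ N = 1) :
    ∑ x ∈ range N, ζ ^ x = if ζ = 1 then (N : K) else 0 := by
  split_ifs with hζ
  · simp [hζ]
  · rw [geom_sum_eq hζ, h, sub_self, zero_div]

theorem sum_range_cos_mul_two_pi_div (N : ℕ) (n : ℤ) :
    ∑ x ∈ range N, cos (x * (2 * π * n / N)) = if (N : ℤ) ∣ n then (N : ℝ) else 0 := by
  rcases eq_or_ne N 0 with rfl | hN
  · simp
  obtain ⟨ζ₀, hprim, hζ₀⟩ :
      ∃ ζ₀, IsPrimitiveRoot ζ₀ N ∧ ζ₀ = Complex.exp (2 * π * Complex.I / N) :=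
    ⟨_, Complex.isPrimitiveRoot_exp N hN, rfl⟩
  have hpow : (ζ₀ ^ n) ^ N = 1 := by
    rw [← zpow_natCast, ← zpow_mul, mul_comm, zpow_mul, zpow_natCast, hprim.pow_eq_one,
      one_zpow]
  have hcos (x : ℕ) : cos (x * (2 * π * n / N)) = ((ζ₀ ^ n) ^ x).re := by
    rw [hζ₀, ← Complex.exp_int_mul, ← Complex.exp_nat_mul, ← Complex.exp_ofReal_mul_I_re]
    push_cast
    ring_nf
  calc ∑ x ∈ range N, cos (x * (2 * π * n / N)) = (∑ x ∈ range N, (ζ₀ ^ n) ^ x).re := by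
        simp only [hcos, Complex.re_sum]
    _ = if (N : ℤ) ∣ n then (N : ℝ) else 0 := by
        rw [geom_sum_eq_ite_of_pow_eq_one hpow]
        simp only [hprim.zpow_eq_one_iff_dvd]
        split_ifs <;> simp

theorem sum_Icc_one_eq_sum_range_succ {M : Type*} [AddCommMonoid M] (f : ℕ → M) (h : f 0 = 0)
    (n : ℕ) : ∑ x ∈ Icc 1 n, f x = ∑ x ∈ range (n + 1), f x := by
  rw [range_eq_Ico, sum_eq_sum_Ico_succ_bot (Nat.succ_pos n), h, zero_add, zero_add,
    Nat.succ_eq_add_one, Ico_add_one_right_eq_Icc]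

theorem sin_sq_mul_sin_sq (a b : ℝ) :
    sin a ^ 2 * sin b ^ 2 =
      1 / 4 - cos (2 * a) / 4 - cos (2 * b) / 4 + cos (2 * a + 2 * b) / 8
        + cos (2 * a - 2 * b) / 8 := by
  rw [sin_sq_eq_half_sub a, sin_sq_eq_half_sub b, cos_add, cos_sub]
  ring

theorem sum_range_sin_sq_mul_sin_sq (N : ℕ) (m m' : ℤ) :
    ∑ x ∈ range N, sin (x * (π * m / N)) ^ 2 * sin (x * (π * m' / N)) ^ 2 =
      N / 4 - (if (N : ℤ) ∣ m then (N : ℝ) else 0) / 4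
        - (if (N : ℤ) ∣ m' then (N : ℝ) else 0) / 4
        + (if (N : ℤ) ∣ m + m' then (N : ℝ) else 0) / 8
        + (if (N : ℤ) ∣ m - m' then (N : ℝ) else 0) / 8 := by
  have hdouble (n : ℤ) (x : ℕ) : 2 * (x * (π * n / N)) = x * (2 * π * n / N) := by ring
  have hadd (x : ℕ) : 2 * (x * (π * m / N)) + 2 * (x * (π * m' / N)) =
      x * (2 * π * ((m + m' : ℤ) : ℝ) / N) := by push_cast; ring
  have hsub (x : ℕ) : 2 * (x * (π * m / N)) - 2 * (x * (π * m' / N)) =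
      x * (2 * π * ((m - m' : ℤ) : ℝ) / N) := by push_cast; ring
  simp only [sin_sq_mul_sin_sq, hadd, hsub]
  simp only [hdouble, sum_add_distrib, sum_sub_distrib,
    ← sum_div, sum_range_cos_mul_two_pi_div, sum_const, card_range, nsmul_eq_mul]
  ring

theorem Int.dvd_sub_iff_eq_of_abs_sub_lt {N a b : ℤ} (h : |a - b| < N) : N ∣ a - b ↔ a = b :=
  ⟨fun hd => sub_eq_zero.1 (Int.eq_zero_of_abs_lt_dvd hd h), fun h => by simp [h]⟩

theorem trig_sum_sin_sq_sin_sq_general (ℓ : ℕ) (k k' : ℝ)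
    (hk : ∃ m ∈ Finset.Icc 1 ℓ, k = π * (m : ℝ) / (ℓ + 1))
    (hk' : ∃ m ∈ Finset.Icc 1 ℓ, k' = π * (m : ℝ) / (ℓ + 1)) :
    (2 / ((ℓ : ℝ) + 1)) * ∑ x ∈ Finset.Icc 1 ℓ,
        Real.sin ((x : ℝ) * k) ^ 2 * Real.sin ((x : ℝ) * k') ^ 2 =
      1 / 2 + (1 / 4) * ((if k = k' then (1 : ℝ) else 0) +
        (if k + k' = π then (1 : ℝ) else 0)) := by
  obtain ⟨m, hm, rfl⟩ := hk
  obtain ⟨m', hm', rfl⟩ := hk'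
  rw [mem_Icc] at hm hm'
  have hN : (ℓ : ℝ) + 1 ≠ 0 := by positivity
  have hm_dvd : ¬ (ℓ + 1 : ℤ) ∣ m := by
    exact_mod_cast Nat.not_dvd_of_pos_of_lt (by omega) (by omega)
  have hm'_dvd : ¬ (ℓ + 1 : ℤ) ∣ m' := by
    exact_mod_cast Nat.not_dvd_of_pos_of_lt (by omega) (by omega)
  have hadd_dvd : (ℓ + 1 : ℤ) ∣ m + m' ↔ m + m' = ℓ + 1 := by
    rw [← dvd_sub_self_right,
      Int.dvd_sub_iff_eq_of_abs_sub_lt (abs_sub_lt_iff.2 ⟨by omega, by omega⟩)]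
    omega
  have hsub_dvd : (ℓ + 1 : ℤ) ∣ m - m' ↔ m = m' := by
    rw [Int.dvd_sub_iff_eq_of_abs_sub_lt (abs_sub_lt_iff.2 ⟨by omega, by omega⟩)]
    omega
  have heq : π * m / (ℓ + 1) = π * m' / (ℓ + 1) ↔ m = m' := by
    rw [div_left_inj' hN, mul_right_inj' pi_ne_zero, Nat.cast_inj]
  have hadd : π * m / (ℓ + 1) + π * m' / (ℓ + 1) = π ↔ m + m' = ℓ + 1 := by
    rw [← add_div, div_eq_iff hN, ← mul_add, mul_right_inj' pi_ne_zero]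
    norm_cast
  have hsum := sum_range_sin_sq_mul_sin_sq (ℓ + 1) m m'
  push_cast at hsum
  rw [sum_Icc_one_eq_sum_range_succ _ (by simp), hsum]
  simp only [hm_dvd, hm'_dvd, hadd_dvd, hsub_dvd, heq, hadd, if_false]
  split_ifs <;> field_simp <;> ring

/-- For momenta `k, k'` in the one-dimensional Dirichlet lattice
`{π m/(ℓ+1) : m ∈ {1,…,ℓ}}`,
`(2/(ℓ+1)) ∑_{x=1}^ℓ sin(xk)² sin(xk')² = 1/2 + (1/4)(δ_{k,k'} + δ_{k+k',π})`. -/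
theorem trig_sum_sin_sq_sin_sq (ℓ : ℕ) (hℓ : 1 ≤ ℓ) (k k' : ℝ)
    (hk : ∃ m ∈ Finset.Icc 1 ℓ, k = π * (m : ℝ) / (ℓ + 1))
    (hk' : ∃ m ∈ Finset.Icc 1 ℓ, k' = π * (m : ℝ) / (ℓ + 1)) :
    (2 / ((ℓ : ℝ) + 1)) * ∑ x ∈ Finset.Icc 1 ℓ,
        Real.sin ((x : ℝ) * k) ^ 2 * Real.sin ((x : ℝ) * k') ^ 2 =
      1 / 2 + (1 / 4) * ((if k = k' then (1 : ℝ) else 0) +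
        (if k + k' = π then (1 : ℝ) else 0)) :=
  trig_sum_sin_sq_sin_sq_general ℓ k k' hk hk'
end

section
/- Let ℓ ≥ 1 be an integer and let k, k' ∈ {π m/(ℓ+1) : m ∈ {1, …, ℓ}}. Then (2/(ℓ+1)) ∑_{x=1}^{ℓ} sin(x k)² cos(x k')² = 1/2 − (1/4)(δ_{k,k'} + δ_{k+k',π}), where δ denotes the Kronecker delta (δ_{a,b} = 1 if a = b and 0 otherwise). -/
/-! Writing `sin² a cos² b` as a combination of `1`, `cos 2a`, `cos 2b` and `cos (2a ± 2b)` turns the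
sum (extended by the vanishing term `x = 0`) into sums `∑_{x < N} cos (2π x j / N)` with `N = ℓ + 1`
and `j ∈ {m, m', m + m', m - m'}`. Each is the real part of a geometric series in an `N`-th root of
unity, hence `N` if `N ∣ j` and `0` otherwise; for `1 ≤ m, m' ≤ ℓ` the divisibility holds only for
`j = m - m'` with `m = m'` and `j = m + m'` with `m + m' = N`. -/

open Real Finset

theorem sum_range_cos_two_pi_mul_div (N : ℕ) (j : ℤ) :
    ∑ x ∈ range N, cos (2 * π * x * j / N) = if (N : ℤ) ∣ j then N else 0 := by
  rcases Nat.eq_zero_or_pos N with rfl | hN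
  · simp
  have hζ := Complex.isPrimitiveRoot_exp N hN.ne'
  have hz (x : ℕ) :
      ((Complex.exp (2 * π * Complex.I / N) ^ j) ^ x).re = cos (2 * π * x * j / N) := by
    rw [← Complex.exp_int_mul, ← Complex.exp_nat_mul, ← Complex.exp_ofReal_mul_I_re]
    congr 2
    push_cast
    ring
  generalize Complex.exp (2 * π * Complex.I / N) = ζ at hζ hz
  have hsum : ∑ x ∈ range N, (ζ ^ j) ^ x = if (N : ℤ) ∣ j then (N : ℂ) else 0 := by
    split_ifs with hdvd
    · simp [(hζ.zpow_eq_one_iff_dvd j).mpr hdvd]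
    · have hz1 : ζ ^ j ≠ 1 := fun h => hdvd ((hζ.zpow_eq_one_iff_dvd j).mp h)
      have hzN : (ζ ^ j) ^ N = 1 := by
        rw [← zpow_natCast, ← zpow_mul, mul_comm, zpow_mul, zpow_natCast, hζ.pow_eq_one, one_zpow]
      rw [geom_sum_eq hz1, hzN, sub_self, zero_div]
  simp_rw [← hz, ← Complex.re_sum, hsum]
  split_ifs <;> simp

theorem sin_sq_mul_cos_sq (a b : ℝ) :
    sin a ^ 2 * cos b ^ 2 =
      1 / 4 - cos (2 * a) / 4 + cos (2 * b) / 4 - cos (2 * a + 2 * b) / 8 - cos (2 * a - 2 * b) / 8 := by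
  rw [cos_add, cos_sub, cos_two_mul, cos_two_mul, sin_two_mul, sin_two_mul]
  nlinarith [sin_sq_add_cos_sq a, sin_sq_add_cos_sq b]

theorem sum_Icc_sin_sq_mul_cos_sq {ℓ m m' : ℕ} (hm : m ∈ Icc 1 ℓ) (hm' : m' ∈ Icc 1 ℓ) :
    ∑ x ∈ Icc 1 ℓ, sin (x * (π * m / (ℓ + 1))) ^ 2 * cos (x * (π * m' / (ℓ + 1))) ^ 2 =
      (ℓ + 1) / 4 - (ℓ + 1) / 8 *
        ((if m = m' then 1 else 0) + (if m + m' = ℓ + 1 then 1 else 0)) := by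
  rw [mem_Icc] at hm hm'
  have hsub : Icc 1 ℓ ⊆ range (ℓ + 1) := fun x hx => by
    simp only [mem_Icc, mem_range] at hx ⊢; omega
  rw [sum_subset hsub fun x hx hx' => by
    obtain rfl : x = 0 := by simp only [mem_Icc, mem_range] at hx hx'; omega
    simp]
  have hterm (x : ℕ) : sin (x * (π * m / (ℓ + 1))) ^ 2 * cos (x * (π * m' / (ℓ + 1))) ^ 2 =
      1 / 4 - cos (2 * π * x * (m : ℤ) / (ℓ + 1 : ℕ)) / 4
        + cos (2 * π * x * (m' : ℤ) / (ℓ + 1 : ℕ)) / 4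
        - cos (2 * π * x * (m + m' : ℤ) / (ℓ + 1 : ℕ)) / 8
        - cos (2 * π * x * (m - m' : ℤ) / (ℓ + 1 : ℕ)) / 8 := by
    rw [sin_sq_mul_cos_sq]
    push_cast
    ring_nf
  have hdvd_iff {t : ℤ} (h : |t| < ℓ + 1) : ((ℓ + 1 : ℕ) : ℤ) ∣ t ↔ t = 0 :=
    ⟨fun hd => Int.eq_zero_of_abs_lt_dvd hd (by push_cast; exact h), fun ht => ht ▸ dvd_zero _⟩
  have hm_dvd : ¬ ((ℓ + 1 : ℕ) : ℤ) ∣ m := by rw [hdvd_iff (by rw [abs_lt]; omega)]; omega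
  have hm'_dvd : ¬ ((ℓ + 1 : ℕ) : ℤ) ∣ m' := by rw [hdvd_iff (by rw [abs_lt]; omega)]; omega
  have hsub_dvd : ((ℓ + 1 : ℕ) : ℤ) ∣ m - m' ↔ m = m' := by
    rw [hdvd_iff (by rw [abs_lt]; omega)]; omega
  have hadd_dvd : ((ℓ + 1 : ℕ) : ℤ) ∣ m + m' ↔ m + m' = ℓ + 1 := by
    rw [← dvd_sub_self_right, hdvd_iff (by rw [abs_lt]; omega)]; omega
  simp only [hterm, sum_sub_distrib, sum_add_distrib, ← sum_div, sum_const, card_range,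
    sum_range_cos_two_pi_mul_div, nsmul_eq_mul, if_neg hm_dvd, if_neg hm'_dvd, hsub_dvd, hadd_dvd]
  split_ifs <;> push_cast <;> ring

theorem trig_sum_sin_sq_cos_sq_general (ℓ : ℕ) (k k' : ℝ)
    (hk : ∃ m ∈ Finset.Icc 1 ℓ, k = π * (m : ℝ) / (ℓ + 1))
    (hk' : ∃ m ∈ Finset.Icc 1 ℓ, k' = π * (m : ℝ) / (ℓ + 1)) :
    (2 / ((ℓ : ℝ) + 1)) * ∑ x ∈ Finset.Icc 1 ℓ,
        Real.sin ((x : ℝ) * k) ^ 2 * Real.cos ((x : ℝ) * k') ^ 2 =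
      1 / 2 - (1 / 4) * ((if k = k' then (1 : ℝ) else 0) +
        (if k + k' = π then (1 : ℝ) else 0)) := by
  obtain ⟨m, hm, rfl⟩ := hk
  obtain ⟨m', hm', rfl⟩ := hk'
  have hN : (ℓ : ℝ) + 1 ≠ 0 := by positivity
  have heq_iff : π * m / (ℓ + 1) = π * m' / (ℓ + 1) ↔ m = m' := by
    rw [div_left_inj' hN, mul_right_inj' pi_ne_zero, Nat.cast_inj]
  have hadd_iff : π * m / (ℓ + 1) + π * m' / (ℓ + 1) = π ↔ m + m' = ℓ + 1 := by
    rw [← add_div, div_eq_iff hN, ← mul_add, mul_right_inj' pi_ne_zero, ← Nat.cast_add,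
      ← Nat.cast_add_one, Nat.cast_inj]
  rw [sum_Icc_sin_sq_mul_cos_sq hm hm']
  simp only [heq_iff, hadd_iff]
  field_simp
  ring

/-- For momenta `k, k'` in the one-dimensional Dirichlet lattice
`{π m/(ℓ+1) : m ∈ {1,…,ℓ}}`,
`(2/(ℓ+1)) ∑_{x=1}^ℓ sin(xk)² cos(xk')² = 1/2 − (1/4)(δ_{k,k'} + δ_{k+k',π})`. -/
theorem trig_sum_sin_sq_cos_sq (ℓ : ℕ) (hℓ : 1 ≤ ℓ) (k k' : ℝ)
    (hk : ∃ m ∈ Finset.Icc 1 ℓ, k = π * (m : ℝ) / (ℓ + 1))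
    (hk' : ∃ m ∈ Finset.Icc 1 ℓ, k' = π * (m : ℝ) / (ℓ + 1)) :
    (2 / ((ℓ : ℝ) + 1)) * ∑ x ∈ Finset.Icc 1 ℓ,
        Real.sin ((x : ℝ) * k) ^ 2 * Real.cos ((x : ℝ) * k') ^ 2 =
      1 / 2 - (1 / 4) * ((if k = k' then (1 : ℝ) else 0) +
        (if k + k' = π then (1 : ℝ) else 0)) :=
  trig_sum_sin_sq_cos_sq_general ℓ k k' hk hk'
end

section
/- Let d = 3, let ℓ ≥ 1 be an integer, let β̃ > 0, and let x ∈ {1, …, ℓ}³. Then ∑_{k ∈ Λ*_ℓ} φ_k(x)² · 1/(e^{β̃ ε(k)} − 1) ≤ (π^{3/2}/8) · ζ(3/2) · β̃^{−3/2}, where ζ is the Riemann zeta function. -/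
open Real

/-- The spin-wave dispersion relation `ε(k) = ∑_j 2(1 − cos k_j)` in dimension `d`. -/
noncomputable def spinWaveEps {d : ℕ} (k : Fin d → ℝ) : ℝ :=
  ∑ j, 2 * (1 - Real.cos (k j))

/-- Squared normalized Dirichlet eigenfunction
`φ_k(x)² = (2/(ℓ+1))^d ∏_j sin(x_j k_j)²` on the box `{1,…,ℓ}^d`. -/
noncomputable def phiSq {d : ℕ} (ℓ : ℕ) (k : Fin d → ℝ) (x : Fin d → ℕ) : ℝ :=
  (2 / ((ℓ : ℝ) + 1)) ^ d * ∏ j, Real.sin ((x j : ℝ) * k j) ^ 2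

lemma one_sub_cos_eq (k : ℝ) : 1 - Real.cos k = 2 * Real.sin (k/2)^2 := by
  have h2 : (2:ℝ) * (k/2) = k := by ring
  have hc := Real.cos_two_mul' (k/2)
  rw [h2] at hc
  have hs := Real.sin_sq_add_cos_sq (k/2)
  linarith

lemma oneD_bound (ℓ : ℕ) (y : ℕ) (t : ℝ) (ht : 0 < t) :
    ∑ m ∈ Finset.Icc 1 ℓ, (2 / ((ℓ:ℝ)+1)) *
      (Real.sin ((y:ℝ) * (π * (m:ℝ) / ((ℓ:ℝ)+1)))^2 *
       Real.exp (-(t * (2 * (1 - Real.cos (π * (m:ℝ) / ((ℓ:ℝ)+1))))))) ≤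
    Real.sqrt (π / (4*t)) := by
  set L : ℝ := (ℓ:ℝ)+1 with hLdef
  have hL0 : (0:ℝ) < L := by positivity
  set c : ℝ := 4*t/L^2 with hcdef
  have hc0 : 0 < c := by positivity
  have hterm : ∀ m ∈ Finset.Icc 1 ℓ,
      (2 / L) * (Real.sin ((y:ℝ) * (π * (m:ℝ) / L))^2 *
        Real.exp (-(t * (2 * (1 - Real.cos (π * (m:ℝ) / L)))))) ≤
      (2 / L) * Real.exp (-c * (m:ℝ)^2) := by
    intro m hm
    rw [Finset.mem_Icc] at hm
    have hm1 : (1:ℝ) ≤ (m:ℝ) := by exact_mod_cast hm.1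
    have hmℓ : (m:ℝ) ≤ (ℓ:ℝ) := by exact_mod_cast hm.2
    set k : ℝ := π * (m:ℝ) / L with hk
    have hk0 : 0 ≤ k/2 := by positivity
    have hkpi : k/2 ≤ π/2 := by
      rw [div_le_div_iff_of_pos_right (by norm_num : (0:ℝ) < 2)] at *
      rw [hk, div_le_iff₀ hL0]
      nlinarith [Real.pi_pos]
    have hsin : (m:ℝ)/L ≤ Real.sin (k/2) := by
      have := Real.mul_le_sin hk0 hkpi
      have heq : 2/π * (k/2) = (m:ℝ)/L := by
        rw [hk]; field_simp
      linarith [heq ▸ this]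
    have hsin0 : (0:ℝ) ≤ (m:ℝ)/L := by positivity
    have hsq : ((m:ℝ)/L)^2 ≤ Real.sin (k/2)^2 := by nlinarith
    have hcos : 2 * ((m:ℝ)/L)^2 ≤ 1 - Real.cos k := by
      rw [one_sub_cos_eq]; nlinarith
    have hexp : Real.exp (-(t * (2 * (1 - Real.cos k)))) ≤ Real.exp (-c * (m:ℝ)^2) := by
      apply Real.exp_le_exp.2
      have : c * (m:ℝ)^2 = 4*t*((m:ℝ)/L)^2 := by
        rw [hcdef]; field_simp
      nlinarith
    have hsin1 : Real.sin ((y:ℝ) * k)^2 ≤ 1 := by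
      nlinarith [Real.neg_one_le_sin ((y:ℝ)*k), Real.sin_le_one ((y:ℝ)*k),
        sq_nonneg (Real.sin ((y:ℝ)*k))]
    have he0 : 0 ≤ Real.exp (-(t * (2 * (1 - Real.cos k)))) := Real.exp_nonneg _
    have : Real.sin ((y:ℝ) * k)^2 * Real.exp (-(t * (2 * (1 - Real.cos k)))) ≤
        Real.exp (-c * (m:ℝ)^2) := by nlinarith
    have h2L : (0:ℝ) ≤ 2/L := by positivity
    exact mul_le_mul_of_nonneg_left this h2L
  calc ∑ m ∈ Finset.Icc 1 ℓ, (2 / L) *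
      (Real.sin ((y:ℝ) * (π * (m:ℝ) / L))^2 *
        Real.exp (-(t * (2 * (1 - Real.cos (π * (m:ℝ) / L))))))
      ≤ ∑ m ∈ Finset.Icc 1 ℓ, (2 / L) * Real.exp (-c * (m:ℝ)^2) :=
        Finset.sum_le_sum hterm
    _ = (2/L) * ∑ m ∈ Finset.Icc 1 ℓ, Real.exp (-c * (m:ℝ)^2) := by
        rw [Finset.mul_sum]
    _ ≤ (2/L) * (Real.sqrt (π/c) / 2) := by
        apply mul_le_mul_of_nonneg_left _ (by positivity)
        have hanti : AntitoneOn (fun u : ℝ => Real.exp (-c * u^2))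
            (Set.Icc (0:ℝ) (0 + ℓ)) := by
          intro a ha b hb hab
          simp only
          apply Real.exp_le_exp.2
          have h1 : a^2 ≤ b^2 := by nlinarith [ha.1]
          nlinarith [hc0]
        have hint := hanti.sum_le_integral
        have hrange : ∑ m ∈ Finset.Icc 1 ℓ, Real.exp (-c * (m:ℝ)^2)
            = ∑ i ∈ Finset.range ℓ, Real.exp (-c * ((0:ℝ) + ((i+1:ℕ):ℝ))^2) := by
          rw [show Finset.Icc 1 ℓ = Finset.Ico 1 (ℓ+1) by rfl, Finset.sum_Ico_eq_sum_range]
          simp only [Nat.add_sub_cancel]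
          apply Finset.sum_congr rfl
          intro i _
          push_cast
          ring_nf
        rw [hrange]
        refine le_trans hint ?_
        have hIoc : (∫ x in (0:ℝ)..(0 + (ℓ:ℝ)), Real.exp (-c * x^2))
            = ∫ x in Set.Ioc (0:ℝ) (0 + (ℓ:ℝ)), Real.exp (-c * x^2) := by
          rw [intervalIntegral.integral_of_le (by positivity)]
        rw [hIoc]
        have hIoi : (∫ x in Set.Ioi (0:ℝ), Real.exp (-c * x^2)) = Real.sqrt (π/c)/2 :=
          integral_gaussian_Ioi c
        rw [← hIoi]
        apply MeasureTheory.setIntegral_mono_set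
        · exact (integrableOn_Ioi_exp_neg_mul_sq_iff.mpr hc0)
        · filter_upwards with x using Real.exp_nonneg _
        · exact (Set.Ioc_subset_Ioi_self).eventuallyLE
    _ = Real.sqrt (π/(4*t)) := by
        have : π / c = L^2 * (π/(4*t)) := by
          rw [hcdef]; field_simp
        rw [this, Real.sqrt_mul (sq_nonneg L), Real.sqrt_sq hL0.le]
        have h2 : 2/L * (L * Real.sqrt (π/(4*t)) / 2) = Real.sqrt (π/(4*t)) * (L/L) := by
          ring
        rw [h2, div_self hL0.ne', mul_one]

lemma key_bound (ℓ : ℕ) (x : Fin 3 → ℕ) (t : ℝ) (ht : 0 < t) :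
    ∑ m ∈ Fintype.piFinset (fun _ : Fin 3 => Finset.Icc 1 ℓ),
        phiSq ℓ (fun j => π * (m j : ℝ) / ((ℓ:ℝ) + 1)) x *
          Real.exp (-(t * spinWaveEps (fun j => π * (m j : ℝ) / ((ℓ:ℝ) + 1)))) ≤
      π ^ ((3 : ℝ) / 2) / 8 * t ^ (-(3 : ℝ) / 2) := by
  set L : ℝ := (ℓ:ℝ)+1 with hLdef
  have hL0 : (0:ℝ) < L := by positivity
  have hfact : ∀ m : Fin 3 → ℕ,
      phiSq ℓ (fun j => π * (m j : ℝ) / L) x *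
        Real.exp (-(t * spinWaveEps (fun j => π * (m j : ℝ) / L))) =
      ∏ j : Fin 3, ((2 / L) *
        (Real.sin ((x j : ℝ) * (π * (m j : ℝ) / L))^2 *
         Real.exp (-(t * (2 * (1 - Real.cos (π * (m j : ℝ) / L))))))) := by
    intro m
    rw [phiSq, spinWaveEps]
    rw [Finset.prod_mul_distrib, Finset.prod_mul_distrib]
    rw [Finset.prod_const]
    have hcard : (Finset.univ : Finset (Fin 3)).card = 3 := by simp
    rw [hcard, ← Real.exp_sum, Finset.sum_neg_distrib, mul_assoc]
    congr 2
    rw [Finset.mul_sum]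
  calc ∑ m ∈ Fintype.piFinset (fun _ : Fin 3 => Finset.Icc 1 ℓ),
        phiSq ℓ (fun j => π * (m j : ℝ) / L) x *
          Real.exp (-(t * spinWaveEps (fun j => π * (m j : ℝ) / L)))
      = ∏ j : Fin 3, ∑ m ∈ Finset.Icc 1 ℓ, ((2 / L) *
          (Real.sin ((x j : ℝ) * (π * (m:ℝ) / L))^2 *
           Real.exp (-(t * (2 * (1 - Real.cos (π * (m:ℝ) / L))))))) := by
        rw [Finset.prod_univ_sum]
        exact Finset.sum_congr rfl fun m _ => hfact m
    _ ≤ ∏ _j : Fin 3, Real.sqrt (π / (4*t)) := by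
        apply Finset.prod_le_prod
        · intro j _
          apply Finset.sum_nonneg
          intro m _
          positivity
        · intro j _
          exact oneD_bound ℓ (x j) t ht
    _ = π ^ ((3 : ℝ) / 2) / 8 * t ^ (-(3 : ℝ) / 2) := by
        rw [Finset.prod_const, Finset.card_univ]
        have h1 : Real.sqrt (π / (4*t)) ^ (3:ℕ) = (π / (4*t)) ^ ((3:ℝ)/2) := by
          rw [Real.sqrt_eq_rpow, ← Real.rpow_natCast ((π/(4*t)) ^ ((1:ℝ)/2)) 3,
            ← Real.rpow_mul (by positivity)]
          norm_num
        simp only [Fintype.card_fin]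
        rw [h1, Real.div_rpow Real.pi_pos.le (by positivity),
          Real.mul_rpow (by norm_num) ht.le]
        have h4 : (4:ℝ) ^ ((3:ℝ)/2) = 8 := by
          rw [show (4:ℝ) = 2^(2:ℕ) by norm_num, ← Real.rpow_natCast 2 2,
            ← Real.rpow_mul (by norm_num)]
          rw [show ((2:ℕ):ℝ)*((3:ℝ)/2) = ((3:ℕ):ℝ) by norm_num, Real.rpow_natCast]
          norm_num
        rw [h4, neg_div, Real.rpow_neg ht.le]
        field_simp

lemma geom_expand (s : ℝ) (hs : 0 < s) :
    1 / (Real.exp s - 1) = ∑' n : ℕ, Real.exp (-(((n:ℝ)+1) * s)) := by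
  have hr1 : Real.exp (-s) < 1 := Real.exp_lt_one_iff.mpr (by linarith)
  have hr0 : (0:ℝ) ≤ Real.exp (-s) := Real.exp_nonneg _
  have hid : ∀ n : ℕ, Real.exp (-(((n:ℝ)+1) * s)) = Real.exp (-s) * Real.exp (-s) ^ n := by
    intro n
    rw [← Real.exp_nat_mul, ← Real.exp_add]
    congr 1
    ring
  rw [tsum_congr hid, tsum_mul_left, tsum_geometric_of_lt_one hr0 hr1]
  have he1 : (1:ℝ) < Real.exp s := Real.one_lt_exp_iff.mpr hs
  rw [Real.exp_neg]
  have h0 : Real.exp s ≠ 0 := (Real.exp_pos s).ne'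
  have h1 : Real.exp s - 1 ≠ 0 := by linarith
  have h2 : 1 - (Real.exp s)⁻¹ ≠ 0 := by
    have : (Real.exp s)⁻¹ < 1 := by
      rw [inv_lt_one_iff₀]; right; exact he1
    linarith
  field_simp

lemma summable_exp_geom (C s : ℝ) (hs : 0 < s) :
    Summable (fun n : ℕ => C * Real.exp (-(((n:ℝ)+1) * s))) := by
  have hid : ∀ n : ℕ, C * Real.exp (-(((n:ℝ)+1) * s))
      = (C * Real.exp (-s)) * Real.exp (-s) ^ n := by
    intro n
    rw [← Real.exp_nat_mul, mul_assoc, ← Real.exp_add]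
    congr 2
    ring
  apply Summable.congr _ (fun n => (hid n).symm)
  exact (summable_geometric_of_lt_one (Real.exp_nonneg _)
    (Real.exp_lt_one_iff.mpr (by linarith))).mul_left _

lemma phiSq_nonneg {d : ℕ} (ℓ : ℕ) (k : Fin d → ℝ) (x : Fin d → ℕ) :
    0 ≤ phiSq ℓ k x := by
  rw [phiSq]
  positivity

/-- in `d = 3`, the expected boson number
`ρ(x) = ∑_{k ∈ Λ*_ℓ} φ_k(x)² (e^{β̃ ε(k)} − 1)⁻¹` is bounded by
`(π^{3/2}/8) ζ(3/2) β̃^{−3/2}`. -/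
theorem boson_density_bound_3d (ℓ : ℕ) (hℓ : 1 ≤ ℓ) (β : ℝ) (hβ : 0 < β)
    (x : Fin 3 → ℕ) (hx : ∀ j, x j ∈ Finset.Icc 1 ℓ) :
    ∑ m ∈ Fintype.piFinset (fun _ : Fin 3 => Finset.Icc 1 ℓ),
        phiSq ℓ (fun j => π * (m j : ℝ) / (ℓ + 1)) x *
          (1 / (Real.exp (β * spinWaveEps (fun j => π * (m j : ℝ) / (ℓ + 1))) - 1)) ≤
      π ^ ((3 : ℝ) / 2) / 8 * (∑' n : ℕ, ((n : ℝ) + 1) ^ (-(3 : ℝ) / 2)) *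
        β ^ (-(3 : ℝ) / 2) := by
  set S := Fintype.piFinset (fun _ : Fin 3 => Finset.Icc 1 ℓ) with hS
  set εf : (Fin 3 → ℕ) → ℝ :=
    fun m => spinWaveEps (fun j => π * (m j : ℝ) / ((ℓ:ℝ) + 1)) with hεf
  set φf : (Fin 3 → ℕ) → ℝ :=
    fun m => phiSq ℓ (fun j => π * (m j : ℝ) / ((ℓ:ℝ) + 1)) x with hφf
  -- positivity of dispersion on the lattice
  have hEps : ∀ m ∈ S, 0 < εf m := by
    intro m hm
    simp only [hεf, spinWaveEps]
    apply Finset.sum_pos _ Finset.univ_nonempty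
    intro j _
    have hmj : m j ∈ Finset.Icc 1 ℓ := by
      rw [hS, Fintype.mem_piFinset] at hm; exact hm j
    rw [Finset.mem_Icc] at hmj
    have h1 : (1:ℝ) ≤ (m j:ℝ) := by exact_mod_cast hmj.1
    have h2 : (m j:ℝ) ≤ (ℓ:ℝ) := by exact_mod_cast hmj.2
    set k : ℝ := π * (m j:ℝ) / ((ℓ:ℝ)+1) with hk
    have hL0 : (0:ℝ) < (ℓ:ℝ)+1 := by positivity
    have hk0 : 0 < k/2 := by rw [hk]; positivity
    have hkpi : k/2 < π := by
      rw [hk, div_div, div_lt_iff₀ (by positivity)]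
      nlinarith [Real.pi_pos]
    have hsinpos := Real.sin_pos_of_pos_of_lt_pi hk0 hkpi
    have := one_sub_cos_eq k
    nlinarith
  -- geometric expansion of each term
  have hterm : ∀ m ∈ S, φf m * (1 / (Real.exp (β * εf m) - 1)) =
      ∑' n : ℕ, φf m * Real.exp (-(((n:ℝ)+1) * (β * εf m))) := by
    intro m hm
    rw [geom_expand (β * εf m) (mul_pos hβ (hEps m hm)), ← tsum_mul_left]
  have hsummG : ∀ m ∈ S,
      Summable (fun n : ℕ => φf m * Real.exp (-(((n:ℝ)+1) * (β * εf m)))) :=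
    fun m hm => summable_exp_geom _ _ (mul_pos hβ (hEps m hm))
  -- the p-series
  have hζ : Summable (fun n : ℕ => ((n:ℝ)+1) ^ (-(3:ℝ)/2)) := by
    have h0 : Summable (fun n : ℕ => ((n:ℝ)) ^ (-(3:ℝ)/2)) :=
      Real.summable_nat_rpow.mpr (by norm_num)
    have := (summable_nat_add_iff (f := fun n : ℕ => ((n:ℝ)) ^ (-(3:ℝ)/2)) 1).mpr h0
    apply this.congr
    intro n
    push_cast
    ring_nf
  set C : ℝ := π ^ ((3 : ℝ) / 2) / 8 with hC
  have hsplit : ∀ n : ℕ, (((n:ℝ)+1)*β) ^ (-(3:ℝ)/2)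
      = ((n:ℝ)+1) ^ (-(3:ℝ)/2) * β ^ (-(3:ℝ)/2) :=
    fun n => Real.mul_rpow (by positivity) hβ.le
  have hsumR : Summable (fun n : ℕ => C * (((n:ℝ)+1)*β) ^ (-(3:ℝ)/2)) := by
    apply Summable.congr ((hζ.mul_right (β ^ (-(3:ℝ)/2))).mul_left C)
    intro n
    rw [hsplit n]
  -- per-n bound
  have hb : ∀ n : ℕ, ∑ m ∈ S, φf m * Real.exp (-(((n:ℝ)+1) * (β * εf m)))
      ≤ C * (((n:ℝ)+1)*β) ^ (-(3:ℝ)/2) := by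
    intro n
    have ht : 0 < ((n:ℝ)+1)*β := by positivity
    have hkb := key_bound ℓ x (((n:ℝ)+1)*β) ht
    rw [hC]
    refine le_trans (le_of_eq (Finset.sum_congr rfl fun m _ => ?_)) hkb
    rw [hφf, hεf]
    congr 2
    ring
  have hsumL : Summable (fun n : ℕ =>
      ∑ m ∈ S, φf m * Real.exp (-(((n:ℝ)+1) * (β * εf m)))) := by
    apply Summable.of_nonneg_of_le _ hb hsumR
    intro n
    apply Finset.sum_nonneg
    intro m _
    exact mul_nonneg (phiSq_nonneg _ _ _) (Real.exp_nonneg _)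
  calc ∑ m ∈ S, φf m * (1 / (Real.exp (β * εf m) - 1))
      = ∑ m ∈ S, ∑' n : ℕ, φf m * Real.exp (-(((n:ℝ)+1) * (β * εf m))) :=
        Finset.sum_congr rfl hterm
    _ = ∑' n : ℕ, ∑ m ∈ S, φf m * Real.exp (-(((n:ℝ)+1) * (β * εf m))) :=
        (Summable.tsum_finsetSum hsummG).symm
    _ ≤ ∑' n : ℕ, C * (((n:ℝ)+1)*β) ^ (-(3:ℝ)/2) :=
        Summable.tsum_le_tsum hb hsumL hsumR
    _ = C * (∑' n : ℕ, ((n:ℝ)+1) ^ (-(3:ℝ)/2)) * β ^ (-(3:ℝ)/2) := by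
        rw [tsum_congr (fun n => by rw [hsplit n, ← mul_assoc])]
        rw [tsum_mul_right, tsum_mul_left]
end

section
/- Let d = 2, let ℓ ≥ 2 be an integer, let β̃ > 0 satisfy 2β̃ > 1 > 2β̃/(ℓ+1), and let x ∈ {1, …, ℓ}². Then ∑_{k ∈ Λ*_ℓ} φ_k(x)² · 1/(e^{β̃ ε(k)} − 1) ≤ 4π β̃^{−1} log ℓ. -/
open Real

/-- Telescoping bound for the inner sum. -/
lemma inner_sum_bound (ℓ a : ℕ) (ha : 1 ≤ a) :
    ∑ b ∈ Finset.Icc 1 ℓ, (((a : ℝ)) ^ 2 + ((b : ℝ)) ^ 2)⁻¹ ≤ 2 * (a : ℝ)⁻¹ := by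
  have hA : (1 : ℝ) ≤ (a : ℝ) := by exact_mod_cast ha
  set g : ℕ → ℝ := fun n => ((a : ℝ) + n)⁻¹ with hg
  have step : ∀ b ∈ Finset.Icc 1 ℓ,
      (((a : ℝ)) ^ 2 + ((b : ℝ)) ^ 2)⁻¹ ≤ 2 * (g (b - 1) - g b) := by
    intro b hb
    obtain ⟨hb1, _⟩ := Finset.mem_Icc.mp hb
    have hB : (1 : ℝ) ≤ (b : ℝ) := by exact_mod_cast hb1
    have hcast : ((b - 1 : ℕ) : ℝ) = (b : ℝ) - 1 := by
      have := Nat.cast_sub hb1 (R := ℝ)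
      simpa using this
    have h1 : (0 : ℝ) < (a : ℝ) + (b : ℝ) - 1 := by linarith
    have h2 : (0 : ℝ) < (a : ℝ) + (b : ℝ) := by linarith
    have hgb1 : g (b - 1) = ((a : ℝ) + (b : ℝ) - 1)⁻¹ := by
      simp only [hg, hcast]
      ring
    have hdiff : g (b - 1) - g b =
        (((a : ℝ) + (b : ℝ) - 1) * ((a : ℝ) + (b : ℝ)))⁻¹ := by
      rw [hgb1]
      simp only [hg]
      field_simp
      try ring
    rw [hdiff]
    have hS : (0 : ℝ) < ((a : ℝ)) ^ 2 + ((b : ℝ)) ^ 2 := by positivity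
    have hP : (0 : ℝ) < ((a : ℝ) + (b : ℝ) - 1) * ((a : ℝ) + (b : ℝ)) := by positivity
    have key : ((a : ℝ) + (b : ℝ) - 1) * ((a : ℝ) + (b : ℝ)) ≤
        2 * (((a : ℝ)) ^ 2 + ((b : ℝ)) ^ 2) := by nlinarith [sq_nonneg ((a : ℝ) - (b : ℝ))]
    calc (((a : ℝ)) ^ 2 + ((b : ℝ)) ^ 2)⁻¹
        ≤ (2 : ℝ) * (2 * (((a : ℝ)) ^ 2 + ((b : ℝ)) ^ 2))⁻¹ := by
          rw [mul_inv]
          rw [← mul_assoc]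
          norm_num
      _ ≤ 2 * (((a : ℝ) + (b : ℝ) - 1) * ((a : ℝ) + (b : ℝ)))⁻¹ := by
          gcongr
  calc ∑ b ∈ Finset.Icc 1 ℓ, (((a : ℝ)) ^ 2 + ((b : ℝ)) ^ 2)⁻¹
      ≤ ∑ b ∈ Finset.Icc 1 ℓ, 2 * (g (b - 1) - g b) := Finset.sum_le_sum step
    _ = 2 * ∑ b ∈ Finset.Icc 1 ℓ, (g (b - 1) - g b) := by rw [Finset.mul_sum]
    _ = 2 * (g 0 - g ℓ) := by
        congr 1
        rw [← Finset.Ico_add_one_right_eq_Icc, Finset.sum_Ico_eq_sum_range]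
        have : ∀ i, g (1 + i - 1) - g (1 + i) = g i - g (i + 1) := by
          intro i; congr 2 <;> omega
        simp_rw [this]
        exact Finset.sum_range_sub' g ℓ
    _ ≤ 2 * (a : ℝ)⁻¹ := by
        have h0 : g 0 = (a : ℝ)⁻¹ := by simp [hg]
        have hgl : 0 ≤ g ℓ := by positivity
        rw [← h0]; nlinarith

/-- in `d = 2`, assuming `2β̃ > 1 > 2β̃/(ℓ+1)`, the expected boson number
`ρ(x) = ∑_{k ∈ Λ*_ℓ} φ_k(x)² (e^{β̃ ε(k)} − 1)⁻¹` is bounded by `4π β̃⁻¹ log ℓ`. -/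
theorem boson_density_bound_2d (ℓ : ℕ) (hℓ : 2 ≤ ℓ) (β : ℝ) (hβ : 0 < β)
    (hβ1 : 2 * β > 1) (hβ2 : 1 > 2 * β / ((ℓ : ℝ) + 1))
    (x : Fin 2 → ℕ) (hx : ∀ j, x j ∈ Finset.Icc 1 ℓ) :
    ∑ m ∈ Fintype.piFinset (fun _ : Fin 2 => Finset.Icc 1 ℓ),
        phiSq ℓ (fun j => π * (m j : ℝ) / (ℓ + 1)) x *
          (1 / (Real.exp (β * spinWaveEps (fun j => π * (m j : ℝ) / (ℓ + 1))) - 1)) ≤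
      4 * π * β⁻¹ * Real.log ℓ := by
  have hL2 : (2 : ℝ) ≤ (ℓ : ℝ) := by exact_mod_cast hℓ
  have hLpos : (0 : ℝ) < (ℓ : ℝ) + 1 := by linarith
  -- Step 1: termwise bound by β⁻¹ ((m 0)² + (m 1)²)⁻¹
  have key : ∀ m ∈ Fintype.piFinset (fun _ : Fin 2 => Finset.Icc 1 ℓ),
      phiSq ℓ (fun j => π * (m j : ℝ) / (ℓ + 1)) x *
        (1 / (Real.exp (β * spinWaveEps (fun j => π * (m j : ℝ) / (ℓ + 1))) - 1)) ≤
      β⁻¹ * (((m 0 : ℝ)) ^ 2 + ((m 1 : ℝ)) ^ 2)⁻¹ := by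
    intro m hm
    rw [Fintype.mem_piFinset] at hm
    have hm' : ∀ j, 1 ≤ m j ∧ m j ≤ ℓ := fun j => Finset.mem_Icc.mp (hm j)
    set k : Fin 2 → ℝ := fun j => π * (m j : ℝ) / (ℓ + 1) with hk
    have hkj : ∀ j, 0 ≤ k j ∧ k j ≤ π := by
      intro j
      have h1 : (1 : ℝ) ≤ (m j : ℝ) := by exact_mod_cast (hm' j).1
      have h2 : (m j : ℝ) ≤ (ℓ : ℝ) := by exact_mod_cast (hm' j).2
      constructor
      · have : 0 ≤ π * (m j : ℝ) := by positivity
        exact div_nonneg this hLpos.le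
      · rw [div_le_iff₀ hLpos]
        nlinarith [pi_pos]
    -- lower bound for epsilon
    have heps : ∀ j, 4 * ((m j : ℝ)) ^ 2 / ((ℓ : ℝ) + 1) ^ 2 ≤ 2 * (1 - Real.cos (k j)) := by
      intro j
      have habs : |k j| ≤ π := by
        rw [abs_of_nonneg (hkj j).1]; exact (hkj j).2
      have hcos := Real.cos_le_one_sub_mul_cos_sq habs
      have hkval : (k j) ^ 2 = π ^ 2 * ((m j : ℝ)) ^ 2 / ((ℓ : ℝ) + 1) ^ 2 := by
        simp only [hk]; field_simp
      have hpi : (0 : ℝ) < π := pi_pos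
      have h2eq : 2 * (2 / π ^ 2 * (k j) ^ 2) = 4 * ((m j : ℝ)) ^ 2 / ((ℓ : ℝ) + 1) ^ 2 := by
        rw [hkval]; field_simp; ring
      rw [← h2eq]
      linarith
    set ε : ℝ := spinWaveEps k with hε
    have hεsum : ε = 2 * (1 - Real.cos (k 0)) + 2 * (1 - Real.cos (k 1)) := by
      simp [hε, spinWaveEps, Fin.sum_univ_two]
    set S : ℝ := ((m 0 : ℝ)) ^ 2 + ((m 1 : ℝ)) ^ 2 with hS
    have hSpos : 0 < S := by
      have h1 : (1 : ℝ) ≤ (m 0 : ℝ) := by exact_mod_cast (hm' 0).1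
      have h2 : (1 : ℝ) ≤ (m 1 : ℝ) := by exact_mod_cast (hm' 1).1
      positivity
    have hεlow : 4 * S / ((ℓ : ℝ) + 1) ^ 2 ≤ ε := by
      rw [hεsum]
      have h0 := heps 0
      have h1 := heps 1
      have : 4 * S / ((ℓ:ℝ)+1)^2 = 4 * ((m 0 : ℝ))^2 / ((ℓ:ℝ)+1)^2 + 4 * ((m 1 : ℝ))^2 / ((ℓ:ℝ)+1)^2 := by
        rw [hS]; ring
      linarith
    have hεpos : 0 < ε := lt_of_lt_of_le (by positivity) hεlow
    have hden : β * (4 * S / ((ℓ : ℝ) + 1) ^ 2) ≤ Real.exp (β * ε) - 1 := by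
      have h1 : β * ε + 1 ≤ Real.exp (β * ε) := Real.add_one_le_exp _
      have h2 : β * (4 * S / ((ℓ : ℝ) + 1) ^ 2) ≤ β * ε := by
        apply mul_le_mul_of_nonneg_left hεlow hβ.le
      linarith
    have hdpos : 0 < β * (4 * S / ((ℓ : ℝ) + 1) ^ 2) := by positivity
    have hinv : 1 / (Real.exp (β * ε) - 1) ≤ (β * (4 * S / ((ℓ : ℝ) + 1) ^ 2))⁻¹ := by
      rw [one_div]
      exact inv_anti₀ hdpos hden
    have hinvpos : 0 ≤ 1 / (Real.exp (β * ε) - 1) := by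
      apply div_nonneg zero_le_one
      linarith
    have hphi : phiSq ℓ k x ≤ (2 / ((ℓ : ℝ) + 1)) ^ 2 := by
      unfold phiSq
      have hprod : ∏ j, Real.sin ((x j : ℝ) * k j) ^ 2 ≤ 1 := by
        apply Finset.prod_le_one
        · intro j _; positivity
        · intro j _
          rw [sq_le_one_iff_abs_le_one]
          exact Real.abs_sin_le_one _
      have hbase : (0 : ℝ) ≤ (2 / ((ℓ : ℝ) + 1)) ^ 2 := by positivity
      calc (2 / ((ℓ : ℝ) + 1)) ^ 2 * ∏ j, Real.sin ((x j : ℝ) * k j) ^ 2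
          ≤ (2 / ((ℓ : ℝ) + 1)) ^ 2 * 1 := by
            apply mul_le_mul_of_nonneg_left hprod hbase
        _ = (2 / ((ℓ : ℝ) + 1)) ^ 2 := mul_one _
    have hphipos : 0 ≤ phiSq ℓ k x := by
      unfold phiSq
      apply mul_nonneg (by positivity)
      apply Finset.prod_nonneg
      intro j _; positivity
    calc phiSq ℓ k x * (1 / (Real.exp (β * ε) - 1))
        ≤ (2 / ((ℓ : ℝ) + 1)) ^ 2 * (β * (4 * S / ((ℓ : ℝ) + 1) ^ 2))⁻¹ :=
          mul_le_mul hphi hinv hinvpos (by positivity)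
      _ = β⁻¹ * S⁻¹ := by
          field_simp
          ring
  refine le_trans (Finset.sum_le_sum key) ?_
  -- Step 2: reindex as a double sum
  have hre : ∑ m ∈ Fintype.piFinset (fun _ : Fin 2 => Finset.Icc 1 ℓ),
      β⁻¹ * (((m 0 : ℝ)) ^ 2 + ((m 1 : ℝ)) ^ 2)⁻¹
      = ∑ a ∈ Finset.Icc 1 ℓ, ∑ b ∈ Finset.Icc 1 ℓ,
          β⁻¹ * (((a : ℝ)) ^ 2 + ((b : ℝ)) ^ 2)⁻¹ := by
    rw [← Finset.sum_product']
    apply Finset.sum_nbij' (fun m => (m 0, m 1)) (fun p => ![p.1, p.2])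
    · intro m hm
      rw [Fintype.mem_piFinset] at hm
      exact Finset.mem_product.mpr ⟨hm 0, hm 1⟩
    · intro p hp
      rw [Fintype.mem_piFinset]
      obtain ⟨hp1, hp2⟩ := Finset.mem_product.mp hp
      intro j
      fin_cases j
      · simpa using hp1
      · simpa using hp2
    · intro m _
      funext j
      fin_cases j <;> simp
    · intro p _
      simp
    · intro m _
      simp
  rw [hre]
  -- Step 3: inner telescoping bound, then harmonic sum
  have step3 : ∀ a ∈ Finset.Icc 1 ℓ,
      ∑ b ∈ Finset.Icc 1 ℓ, β⁻¹ * (((a : ℝ)) ^ 2 + ((b : ℝ)) ^ 2)⁻¹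
      ≤ β⁻¹ * (2 * (a : ℝ)⁻¹) := by
    intro a ha
    rw [← Finset.mul_sum]
    apply mul_le_mul_of_nonneg_left _ (by positivity)
    exact inner_sum_bound ℓ a (Finset.mem_Icc.mp ha).1
  refine le_trans (Finset.sum_le_sum step3) ?_
  have hharm : ∑ a ∈ Finset.Icc 1 ℓ, (a : ℝ)⁻¹ ≤ 1 + Real.log ℓ := by
    have h := harmonic_le_one_add_log ℓ
    rw [harmonic_eq_sum_Icc] at h
    push_cast at h
    exact h
  have hsum : ∑ a ∈ Finset.Icc 1 ℓ, β⁻¹ * (2 * (a : ℝ)⁻¹)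
      = 2 * β⁻¹ * ∑ a ∈ Finset.Icc 1 ℓ, (a : ℝ)⁻¹ := by
    rw [Finset.mul_sum]
    apply Finset.sum_congr rfl
    intro a _; ring
  rw [hsum]
  -- Step 4: numeric conclusion
  have hlog2 : Real.log 2 ≤ Real.log ℓ := Real.log_le_log (by norm_num) hL2
  have hlog2' : (0.6931471803 : ℝ) < Real.log 2 := Real.log_two_gt_d9
  have hpi : (3.141592 : ℝ) < π := Real.pi_gt_d6
  have hβinv : (0 : ℝ) < β⁻¹ := by positivity
  have hlogpos : 0 < Real.log ℓ := by linarith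
  calc 2 * β⁻¹ * ∑ a ∈ Finset.Icc 1 ℓ, (a : ℝ)⁻¹
      ≤ 2 * β⁻¹ * (1 + Real.log ℓ) := by
        apply mul_le_mul_of_nonneg_left hharm (by positivity)
    _ = β⁻¹ * (2 * (1 + Real.log ℓ)) := by ring
    _ ≤ β⁻¹ * (4 * π * Real.log ℓ) := by
        apply mul_le_mul_of_nonneg_left _ hβinv.le
        nlinarith [mul_lt_mul_of_pos_right hpi hlogpos]
    _ = 4 * π * β⁻¹ * Real.log ℓ := by ring
end

section
/- Let d = 3, let ℓ ≥ 1 be an integer, let β̃ > 0, and let x ∈ {1, …, ℓ}³. Then ∑_{k ∈ Λ*_ℓ} φ_k(x)² · 1/(e^{β̃ ε(k)} − 1) ≤ 8π β̃^{−1}. -/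
open Real Finset

/-- Cube sum bound: `∑_{m ∈ {1..n}³} 1/|m|² ≤ 3n`. -/
lemma cube_inv_sq_sum_le (n : ℕ) :
    ∑ m ∈ Fintype.piFinset (fun _ : Fin 3 => Finset.Icc 1 n),
      (1 : ℝ) / (∑ j, ((m j : ℝ)) ^ 2) ≤ 3 * n := by
  induction n with
  | zero => simp
  | succ n ih =>
    set A := Fintype.piFinset (fun _ : Fin 3 => Finset.Icc 1 (n + 1)) with hA
    set B := Fintype.piFinset (fun _ : Fin 3 => Finset.Icc 1 n) with hB
    have hBA : B ⊆ A := by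
      apply Fintype.piFinset_subset
      intro a
      exact Finset.Icc_subset_Icc_right (Nat.le_succ n)
    have hsplit : ∑ m ∈ A, (1 : ℝ) / (∑ j, ((m j : ℝ)) ^ 2)
        = ∑ m ∈ B, (1 : ℝ) / (∑ j, ((m j : ℝ)) ^ 2)
          + ∑ m ∈ A \ B, (1 : ℝ) / (∑ j, ((m j : ℝ)) ^ 2) := by
      rw [add_comm, Finset.sum_sdiff hBA]
    have hcardA : A.card = (n + 1) ^ 3 := by
      rw [hA, Fintype.card_piFinset]
      simp [Nat.card_Icc]
    have hcardB : B.card = n ^ 3 := by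
      rw [hB, Fintype.card_piFinset]
      simp [Nat.card_Icc]
    have hcard : (A \ B).card ≤ 3 * (n + 1) ^ 2 := by
      rw [Finset.card_sdiff_of_subset hBA, hcardA, hcardB]
      have : (n + 1) ^ 3 = n ^ 3 + (3 * n ^ 2 + 3 * n + 1) := by ring
      rw [this, Nat.add_sub_cancel_left]
      nlinarith
    have hterm : ∀ m ∈ A \ B, (1 : ℝ) / (∑ j, ((m j : ℝ)) ^ 2) ≤ 1 / ((n : ℝ) + 1) ^ 2 := by
      intro m hm
      rw [Finset.mem_sdiff] at hm
      obtain ⟨hmA, hmB⟩ := hm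
      rw [hA, Fintype.mem_piFinset] at hmA
      rw [hB, Fintype.mem_piFinset] at hmB
      push_neg at hmB
      obtain ⟨j, hj⟩ := hmB
      have hj1 : m j = n + 1 := by
        have := hmA j
        rw [Finset.mem_Icc] at this hj
        omega
      apply one_div_le_one_div_of_le (by positivity)
      calc ((n : ℝ) + 1) ^ 2 = ((m j : ℝ)) ^ 2 := by rw [hj1]; push_cast; ring
        _ ≤ ∑ i, ((m i : ℝ)) ^ 2 :=
          Finset.single_le_sum (f := fun i => ((m i : ℝ)) ^ 2) (fun i _ => by positivity) (Finset.mem_univ j)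
    have hsd : ∑ m ∈ A \ B, (1 : ℝ) / (∑ j, ((m j : ℝ)) ^ 2) ≤ 3 := by
      calc ∑ m ∈ A \ B, (1 : ℝ) / (∑ j, ((m j : ℝ)) ^ 2)
          ≤ (A \ B).card • (1 / ((n : ℝ) + 1) ^ 2) := Finset.sum_le_card_nsmul _ _ _ hterm
        _ = ((A \ B).card : ℝ) * (1 / ((n : ℝ) + 1) ^ 2) := by rw [nsmul_eq_mul]
        _ ≤ (3 * ((n : ℝ) + 1) ^ 2) * (1 / ((n : ℝ) + 1) ^ 2) := by
            apply mul_le_mul_of_nonneg_right _ (by positivity)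
            calc ((A \ B).card : ℝ) ≤ ((3 * (n + 1) ^ 2 : ℕ) : ℝ) := by exact_mod_cast hcard
              _ = 3 * ((n : ℝ) + 1) ^ 2 := by push_cast; ring
        _ = 3 := by field_simp
    calc ∑ m ∈ A, (1 : ℝ) / (∑ j, ((m j : ℝ)) ^ 2)
        ≤ 3 * n + 3 := by rw [hsplit]; exact add_le_add ih hsd
      _ = 3 * (n + 1 : ℕ) := by push_cast; ring

/-- in `d = 3`, the expected boson number
`ρ(x) = ∑_{k ∈ Λ*_ℓ} φ_k(x)² (e^{β̃ ε(k)} − 1)⁻¹` is bounded by `8π β̃⁻¹`. -/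
theorem boson_density_bound_3d_small_beta (ℓ : ℕ) (hℓ : 1 ≤ ℓ) (β : ℝ) (hβ : 0 < β)
    (x : Fin 3 → ℕ) (hx : ∀ j, x j ∈ Finset.Icc 1 ℓ) :
    ∑ m ∈ Fintype.piFinset (fun _ : Fin 3 => Finset.Icc 1 ℓ),
        phiSq ℓ (fun j => π * (m j : ℝ) / (ℓ + 1)) x *
          (1 / (Real.exp (β * spinWaveEps (fun j => π * (m j : ℝ) / (ℓ + 1))) - 1)) ≤
      8 * π * β⁻¹ := by
  set t : ℝ := (ℓ : ℝ) + 1 with ht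
  have htpos : 0 < t := by positivity
  -- per-term bound
  have hterm : ∀ m ∈ Fintype.piFinset (fun _ : Fin 3 => Finset.Icc 1 ℓ),
      phiSq ℓ (fun j => π * (m j : ℝ) / (ℓ + 1)) x *
          (1 / (Real.exp (β * spinWaveEps (fun j => π * (m j : ℝ) / (ℓ + 1))) - 1))
        ≤ 2 / (β * t) * (1 / (∑ j, ((m j : ℝ)) ^ 2)) := by
    intro m hm
    rw [Fintype.mem_piFinset] at hm
    have hm1 : ∀ j, 1 ≤ m j := fun j => (Finset.mem_Icc.mp (hm j)).1
    have hm2 : ∀ j, (m j : ℝ) ≤ (ℓ : ℝ) := fun j => by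
      exact_mod_cast (Finset.mem_Icc.mp (hm j)).2
    set S : ℝ := ∑ j, ((m j : ℝ)) ^ 2 with hS
    have hS3 : (3 : ℝ) ≤ S := by
      have : ∀ j ∈ Finset.univ, (1 : ℝ) ≤ ((m j : ℝ)) ^ 2 := fun j _ => by
        have : (1 : ℝ) ≤ (m j : ℝ) := by exact_mod_cast hm1 j
        nlinarith
      calc (3 : ℝ) = ∑ _j : Fin 3, (1 : ℝ) := by simp
        _ ≤ S := Finset.sum_le_sum this
    have hSpos : 0 < S := by linarith
    -- dispersion lower bound
    have heps : 4 * S / t ^ 2 ≤ spinWaveEps (fun j => π * (m j : ℝ) / (ℓ + 1)) := by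
      rw [spinWaveEps]
      have : ∀ j ∈ Finset.univ, 4 * ((m j : ℝ)) ^ 2 / t ^ 2
          ≤ 2 * (1 - Real.cos (π * (m j : ℝ) / (ℓ + 1))) := by
        intro j _
        set k : ℝ := π * (m j : ℝ) / (ℓ + 1) with hk
        have hmj1 : (1 : ℝ) ≤ (m j : ℝ) := by exact_mod_cast hm1 j
        have hk0 : 0 ≤ k := by
          have := Real.pi_pos
          rw [hk]; positivity
        have hkpi : k ≤ π := by
          rw [hk, div_le_iff₀ htpos]
          have := Real.pi_pos
          nlinarith [hm2 j]
        have hcos := Real.cos_le_one_sub_mul_cos_sq (x := k) (by rw [abs_of_nonneg hk0]; exact hkpi)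
        have hksq : 2 / π ^ 2 * k ^ 2 = 2 * ((m j : ℝ)) ^ 2 / t ^ 2 := by
          rw [hk]
          have hpi := Real.pi_ne_zero
          field_simp
          ring
        have h4 : 4 * ((m j : ℝ)) ^ 2 / t ^ 2 = 2 * (2 / π ^ 2 * k ^ 2) := by
          rw [hksq]; ring
        linarith [hcos]
      calc 4 * S / t ^ 2 = ∑ j : Fin 3, 4 * ((m j : ℝ)) ^ 2 / t ^ 2 := by
            rw [hS, Finset.mul_sum, Finset.sum_div]
        _ ≤ _ := Finset.sum_le_sum this
    set E : ℝ := spinWaveEps (fun j => π * (m j : ℝ) / (ℓ + 1)) with hE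
    have hzpos : 0 < β * E := by
      apply mul_pos hβ
      calc (0:ℝ) < 4 * S / t ^ 2 := by positivity
        _ ≤ E := heps
    -- Bose factor bound
    have hexp : β * E ≤ Real.exp (β * E) - 1 := by
      have := Real.add_one_le_exp (β * E)
      linarith
    have hinv : 1 / (Real.exp (β * E) - 1) ≤ t ^ 2 / (4 * β * S) := by
      have h1 : 1 / (Real.exp (β * E) - 1) ≤ 1 / (β * E) :=
        one_div_le_one_div_of_le hzpos hexp
      have h2 : 1 / (β * E) ≤ 1 / (β * (4 * S / t ^ 2)) := by
        apply one_div_le_one_div_of_le (by positivity)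
        exact mul_le_mul_of_nonneg_left heps hβ.le
      have h3 : 1 / (β * (4 * S / t ^ 2)) = t ^ 2 / (4 * β * S) := by
        field_simp
      linarith
    have hinvnn : 0 ≤ 1 / (Real.exp (β * E) - 1) := by
      apply div_nonneg zero_le_one
      linarith
    -- phiSq bound
    have hphi : phiSq ℓ (fun j => π * (m j : ℝ) / (ℓ + 1)) x ≤ (2 / t) ^ 3 := by
      rw [phiSq]
      have hprod : ∏ j : Fin 3, Real.sin ((x j : ℝ) * (π * (m j : ℝ) / (ℓ + 1))) ^ 2 ≤ 1 :=
        Finset.prod_le_one (fun j _ => by positivity)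
          (fun j _ => by nlinarith [Real.neg_one_le_sin ((x j : ℝ) * (π * (m j : ℝ) / (ℓ + 1))),
            Real.sin_le_one ((x j : ℝ) * (π * (m j : ℝ) / (ℓ + 1)))])
      calc (2 / ((ℓ : ℝ) + 1)) ^ 3 * ∏ j : Fin 3, Real.sin ((x j : ℝ) * (π * (m j : ℝ) / (ℓ + 1))) ^ 2
          ≤ (2 / ((ℓ : ℝ) + 1)) ^ 3 * 1 := by
            apply mul_le_mul_of_nonneg_left hprod (by positivity)
        _ = (2 / t) ^ 3 := by rw [mul_one]
    have hphinn : 0 ≤ phiSq ℓ (fun j => π * (m j : ℝ) / (ℓ + 1)) x := by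
      rw [phiSq]
      positivity
    calc phiSq ℓ (fun j => π * (m j : ℝ) / (ℓ + 1)) x * (1 / (Real.exp (β * E) - 1))
        ≤ (2 / t) ^ 3 * (t ^ 2 / (4 * β * S)) := mul_le_mul hphi hinv hinvnn (by positivity)
      _ = 2 / (β * t) * (1 / S) := by
          field_simp
          ring
  calc ∑ m ∈ Fintype.piFinset (fun _ : Fin 3 => Finset.Icc 1 ℓ),
        phiSq ℓ (fun j => π * (m j : ℝ) / (ℓ + 1)) x *
          (1 / (Real.exp (β * spinWaveEps (fun j => π * (m j : ℝ) / (ℓ + 1))) - 1))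
      ≤ ∑ m ∈ Fintype.piFinset (fun _ : Fin 3 => Finset.Icc 1 ℓ),
          2 / (β * t) * (1 / (∑ j, ((m j : ℝ)) ^ 2)) := Finset.sum_le_sum hterm
    _ = 2 / (β * t) * ∑ m ∈ Fintype.piFinset (fun _ : Fin 3 => Finset.Icc 1 ℓ),
          (1 : ℝ) / (∑ j, ((m j : ℝ)) ^ 2) := by rw [Finset.mul_sum]
    _ ≤ 2 / (β * t) * (3 * ℓ) := by
        apply mul_le_mul_of_nonneg_left (cube_inv_sq_sum_le ℓ) (by positivity)
    _ ≤ 8 * π * β⁻¹ := by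
        have hpi : (3 : ℝ) < π := Real.pi_gt_three
        have h1 : 2 / (β * t) * (3 * ℓ) ≤ 6 / β := by
          rw [div_mul_eq_mul_div, div_le_div_iff₀ (by positivity) hβ]
          have : (ℓ : ℝ) ≤ t := by rw [ht]; linarith
          have h6 : β * (ℓ : ℝ) ≤ β * t := mul_le_mul_of_nonneg_left this hβ.le
          linarith
        have h2 : 6 / β ≤ 8 * π * β⁻¹ := by
          rw [div_eq_mul_inv]
          apply mul_le_mul_of_nonneg_right _ (by positivity)
          linarith
        linarith
end
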